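/- Let a ∈ ℂ, s₀⁰, s₀^∞, s₁^∞ ∈ ℂ, and let G = [[g₁₁, g₁₂],[g₂₁, g₂₂]] be a 2×2 complex matrix with det G = g₁₁g₂₂ − g₁₂g₂₁ = 1. Set S₀⁰ := [[1, s₀⁰],[0,1]], S₀^∞ := [[1,0],[s₀^∞,1]], S₁^∞ := [[1, s₁^∞],[0,1]], σ₁ := [[0,1],[1,0]], σ₃ := [[1,0],[0,−1]], and E := [[e^{−π(a − i/2)}, 0],[0, e^{π(a − i/2)}]]. Then the semi-cyclic relation G⁻¹ S₀⁰ σ₁ G = S₀^∞ S₁^∞ σ₃ E holds if and only if the following four equations hold: (1) s₀^∞ s₁^∞ = −1 − e^{−2πa} − i s₀⁰ e^{−πa}; (2) g₂₂g₂₁ − g₁₁g₁₂ + s₀⁰ g₁₁g₂₂ = i e^{−πa}; (3) g₁₁² − g₂₁² − s₀⁰ g₁₁g₂₁ = i e^{−πa} s₀^∞; (4) g₂₂² − g₁₂² + s₀⁰ g₁₂g₂₂ = i e^{πa} s₁^∞. -/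

import Mathlib

/-!
Conjugation by `G` preserves the trace, and a `2 × 2` matrix is determined by its trace and
three of its entries. Since `det G = 1`, `G⁻¹` is the adjugate of `G`, and the `(0,0)`, `(1,0)`
and `(0,1)` entries of `G⁻¹ S₀⁰ σ₁ G = S₀^∞ S₁^∞ σ₃ E` are equations (2), (3), (4).
What remains is `tr (S₀⁰ σ₁) = tr (S₀^∞ S₁^∞ σ₃ E)`, i.e.
`s₀⁰ = i e^{−πa} + i e^{πa} (s₀^∞ s₁^∞ + 1)`, which is equation (1) multiplied by `i e^{πa}`.
-/

open Complex Matrix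

/-- `E := e^{−π(a − i/2)σ₃}`. -/
noncomputable def Emat (a : ℂ) : Matrix (Fin 2) (Fin 2) ℂ :=
  !![Complex.exp (-((Real.pi : ℂ) * (a - Complex.I / 2))), 0;
     0, Complex.exp ((Real.pi : ℂ) * (a - Complex.I / 2))]

namespace Matrix

theorem ext_iff_trace_fin_two {R : Type*} [AddCommGroup R] {A B : Matrix (Fin 2) (Fin 2) R} :
    A = B ↔ A.trace = B.trace ∧ A 0 0 = B 0 0 ∧ A 1 0 = B 1 0 ∧ A 0 1 = B 0 1 := by
  refine ⟨fun h => h ▸ ⟨rfl, rfl, rfl, rfl⟩, fun ⟨htr, h00, h10, h01⟩ => ?_⟩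
  rw [trace_fin_two, trace_fin_two, h00, add_left_cancel_iff] at htr
  ext i j
  fin_cases i <;> fin_cases j <;> assumption

theorem inv_eq_adjugate_of_det_eq_one {R n : Type*} [CommRing R] [Fintype n] [DecidableEq n]
    {A : Matrix n n R} (h : A.det = 1) : A⁻¹ = A.adjugate := by
  rw [inv_def, h, Ring.inverse_one, one_smul]

end Matrix

theorem exp_pi_mul_I_div_two : exp (Real.pi * (I / 2)) = I := by
  rw [show (Real.pi : ℂ) * (I / 2) = Real.pi / 2 * I by ring, exp_pi_div_two_mul_I]

theorem Emat_eq (a : ℂ) :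
    Emat a = !![I * exp (-(Real.pi * a)), 0; 0, -I * exp (Real.pi * a)] := by
  have h₁ : -(Real.pi * (a - I / 2)) = -(Real.pi * a) + Real.pi * (I / 2) := by ring
  have h₂ : Real.pi * (a - I / 2) = Real.pi * a - Real.pi * (I / 2) := by ring
  rw [Emat, h₁, h₂, exp_add, exp_sub, exp_pi_mul_I_div_two, div_I]
  ring_nf

theorem eq_add_mul_iff_of_mul_eq_one {R : Type*} [CommRing R] {i p q : R} (hi : i ^ 2 = -1)
    (hpq : p * q = 1) (s x : R) :
    s = i * p + i * q * (x + 1) ↔ x = -1 - p ^ 2 - i * s * p := by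
  constructor <;> intro h
  · linear_combination (i * p) * h - (x + 1) * hpq + (p ^ 2 + p * q * (x + 1)) * hi
  · linear_combination (-i * q) * h + (s * i ^ 2 + i * p) * hpq + s * hi

/-- The semi-cyclic relation `G⁻¹ S₀⁰ σ₁ G = S₀^∞ S₁^∞ σ₃ E` is equivalent,
for an `SL(2,ℂ)` connection matrix `G`, to the four equations cutting out the
manifold of monodromy data. -/
theorem semicyclic_iff_monodromy_equations
    (a s00 s0inf s1inf : ℂ) (G : Matrix (Fin 2) (Fin 2) ℂ)
    (hdet : G 0 0 * G 1 1 - G 0 1 * G 1 0 = 1) :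
    (G⁻¹ * !![(1 : ℂ), s00; 0, 1] * !![(0 : ℂ), 1; 1, 0] * G
        = !![(1 : ℂ), 0; s0inf, 1] * !![(1 : ℂ), s1inf; 0, 1]
            * !![(1 : ℂ), 0; 0, -1] * Emat a)
      ↔ (s0inf * s1inf
            = -1 - Complex.exp (-(2 * (Real.pi : ℂ) * a))
              - Complex.I * s00 * Complex.exp (-((Real.pi : ℂ) * a)) ∧
          G 1 1 * G 1 0 - G 0 0 * G 0 1 + s00 * G 0 0 * G 1 1
            = Complex.I * Complex.exp (-((Real.pi : ℂ) * a)) ∧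
          (G 0 0) ^ 2 - (G 1 0) ^ 2 - s00 * G 0 0 * G 1 0
            = Complex.I * Complex.exp (-((Real.pi : ℂ) * a)) * s0inf ∧
          (G 1 1) ^ 2 - (G 0 1) ^ 2 + s00 * G 0 1 * G 1 1
            = Complex.I * Complex.exp ((Real.pi : ℂ) * a) * s1inf) := by
  have hG : G.det = 1 := by rwa [det_fin_two]
  have hpq : exp (-(Real.pi * a)) * exp (Real.pi * a) = 1 := by
    rw [← exp_add, neg_add_cancel, exp_zero]
  have hp2 : exp (-(2 * Real.pi * a)) = exp (-(Real.pi * a)) ^ 2 := by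
    rw [← exp_nat_mul]; ring_nf
  rw [ext_iff_trace_fin_two, Matrix.mul_assoc G⁻¹,
    trace_conj' (G.isUnit_iff_isUnit_det.mpr (hG ▸ isUnit_one)),
    inv_eq_adjugate_of_det_eq_one hG, adjugate_fin_two, Emat_eq, hp2,
    ← eq_add_mul_iff_of_mul_eq_one I_sq hpq]
  simp only [trace_fin_two, mul_apply, Fin.sum_univ_two, of_apply, cons_val_zero, cons_val_one]
  refine and_congr ?_ (and_congr ?_ (and_congr ?_ ?_)) <;>
    exact ⟨fun h => by linear_combination h, fun h => by linear_combination h⟩
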